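/- Let (M, W, met, mr, ≺) be a bounded monotonic metric (strict linear order ≺) and m ∈ M. Let G be a finite weighted graph with root set R ⊆ V and μ(v,ρ) the maximum metric of node v with respect to root ρ (as in the maximum metric path definition). Suppose an assignment level : V → M satisfies level(v) ⪯ max(m, max_{ρ∈R} μ(v,ρ)) for all v. If a node v updates level(v) := met(level(p), w_{v,p}) for some neighbor p, then the updated assignment still satisfies level(v) ⪯ max(m, max_{ρ∈R} μ(v,ρ)). -/
import Mathlib


/-- The metric of a walk: iterate `met` along the edge weights, starting from `m`
at the walk's first vertex. -/
def walkMetric {V M W : Type*} (met : M → W → M) (wf : Sym2 V → W)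
    {G : SimpleGraph V} {a b : V} (m : M) (p : G.Walk a b) : M :=
  p.edges.foldl (fun acc e => met acc (wf e)) m

/-- `mu met wf mr G hG v ρ` is the maximum metric of node `v` when `ρ` plays the
role of the root: the `≺`-maximum, over all simple paths from `ρ` to `v`, of the
metric of the path (iterating `met` from `mr`). -/
noncomputable def mu {V M W : Type*} [Fintype V] [DecidableEq V] [LinearOrder M]
    (met : M → W → M) (wf : Sym2 V → W) (mr : M)
    (G : SimpleGraph V) [DecidableRel G.Adj] (hG : G.Connected) (v ρ : V) : M :=
  (Finset.univ : Finset (G.Path ρ v)).sup'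
    (Finset.univ_nonempty_iff.mpr ((hG.preconnected ρ v).elim fun p => ⟨p.toPath⟩))
    (fun p => walkMetric met wf mr p.val)

section Aux
variable {V M W : Type*} [LinearOrder M] {G : SimpleGraph V}
  {met : M → W → M} {wf : Sym2 V → W}

lemma met_le_self (hbounded : ∀ (m : M) (w : W), met m w < m ∨ met m w = m)
    (m : M) (w : W) : met m w ≤ m := by
  rcases hbounded m w with h | h
  · exact h.le
  · exact h.le

lemma met_mono (hmono : ∀ (m m' : M) (w : W), m < m' → met m w < met m' w ∨ met m w = met m' w)
    {m m' : M} (w : W) (h : m ≤ m') : met m w ≤ met m' w := by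
  rcases lt_or_eq_of_le h with h | h
  · rcases hmono m m' w h with h | h
    · exact h.le
    · exact h.le
  · subst h; exact le_rfl

lemma walkMetric_le_self (hbounded : ∀ (m : M) (w : W), met m w < m ∨ met m w = m)
    {a b : V} (m : M) (q : G.Walk a b) : walkMetric met wf m q ≤ m := by
  unfold walkMetric
  generalize q.edges = l
  induction l generalizing m with
  | nil => simp
  | cons e l ih => exact le_trans (ih _) (met_le_self hbounded m (wf e))

lemma walkMetric_mono
    (hmono : ∀ (m m' : M) (w : W), m < m' → met m w < met m' w ∨ met m w = met m' w)
    {a b : V} {m m' : M} (q : G.Walk a b) (h : m ≤ m') :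
    walkMetric met wf m q ≤ walkMetric met wf m' q := by
  unfold walkMetric
  generalize q.edges = l
  induction l generalizing m m' with
  | nil => simpa
  | cons e l ih => exact ih (met_mono hmono _ h)

lemma walkMetric_append {a b c : V} (m : M) (q : G.Walk a b) (r : G.Walk b c) :
    walkMetric met wf m (q.append r) = walkMetric met wf (walkMetric met wf m q) r := by
  simp [walkMetric, SimpleGraph.Walk.edges_append, List.foldl_append]

lemma walkMetric_cons {a b c : V} (m : M) (h : G.Adj a b) (q : G.Walk b c) :
    walkMetric met wf m (SimpleGraph.Walk.cons h q)
      = walkMetric met wf (met m (wf s(a, b))) q := by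
  simp [walkMetric]

lemma walkMetric_concat {a b c : V} (m : M) (q : G.Walk a b) (h : G.Adj b c) :
    walkMetric met wf m (q.concat h) = met (walkMetric met wf m q) (wf s(b, c)) := by
  simp [walkMetric, SimpleGraph.Walk.concat, SimpleGraph.Walk.edges_append,
    List.foldl_append]

lemma walkMetric_le_bypass [DecidableEq V]
    (hbounded : ∀ (m : M) (w : W), met m w < m ∨ met m w = m)
    (hmono : ∀ (m m' : M) (w : W), m < m' → met m w < met m' w ∨ met m w = met m' w)
    {a b : V} (q : G.Walk a b) (m : M) :
    walkMetric met wf m q ≤ walkMetric met wf m q.bypass := by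
  induction q generalizing m with
  | nil => simp [SimpleGraph.Walk.bypass]
  | @cons a c b ha q ih =>
    rw [SimpleGraph.Walk.bypass]
    split_ifs with hs
    · calc walkMetric met wf m (SimpleGraph.Walk.cons ha q)
          = walkMetric met wf (met m (wf s(a, c))) q := walkMetric_cons ..
        _ ≤ walkMetric met wf (met m (wf s(a, c))) q.bypass := ih _
        _ ≤ walkMetric met wf m q.bypass :=
            walkMetric_mono hmono _ (met_le_self hbounded _ _)
        _ ≤ walkMetric met wf m (q.bypass.dropUntil a hs) := by
            conv_lhs => rw [← (q.bypass.take_spec hs)]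
            rw [walkMetric_append]
            exact walkMetric_mono hmono _ (walkMetric_le_self hbounded _ _)
    · rw [walkMetric_cons, walkMetric_cons]
      exact ih _

end Aux

/-- Any walk's metric is at most the maximum-metric `mu`. -/
lemma walkMetric_le_mu {V M W : Type*} [Fintype V] [DecidableEq V] [LinearOrder M]
    {met : M → W → M} {wf : Sym2 V → W} (mr : M)
    {G : SimpleGraph V} [DecidableRel G.Adj] (hG : G.Connected)
    (hbounded : ∀ (m : M) (w : W), met m w < m ∨ met m w = m)
    (hmono : ∀ (m m' : M) (w : W), m < m' → met m w < met m' w ∨ met m w = met m' w)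
    {ρ v : V} (q : G.Walk ρ v) :
    walkMetric met wf mr q ≤ mu met wf mr G hG v ρ := by
  calc walkMetric met wf mr q
      ≤ walkMetric met wf mr q.bypass := walkMetric_le_bypass hbounded hmono q mr
    _ = walkMetric met wf mr (q.toPath : G.Path ρ v).val := rfl
    _ ≤ mu met wf mr G hG v ρ :=
        Finset.le_sup' (fun P : G.Path ρ v => walkMetric met wf mr P.val)
          (Finset.mem_univ q.toPath)

/-- Closure step of predicate `IM_m` (Lemma 2): if `level x ⪯ max m (max_{ρ∈R} μ(x,ρ))`
holds for all nodes and node `v` updates `level v := met (level p) w_{v,p}` for a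
neighbor `p` (all other nodes unchanged), then the invariant still holds. -/
theorem IM_closure_step
    {V M W : Type*} [Fintype V] [DecidableEq V] [LinearOrder M] [Fintype M]
    (met : M → W → M) (wf : Sym2 V → W) (mr : M) (hmr : ∀ m : M, m ≤ mr)
    (hbounded : ∀ (m : M) (w : W), met m w < m ∨ met m w = m)
    (hmono : ∀ (m m' : M) (w : W), m < m' → met m w < met m' w ∨ met m w = met m' w)
    (G : SimpleGraph V) [DecidableRel G.Adj] (hG : G.Connected)
    (R : Finset V) (hR : R.Nonempty)
    (m : M) (level level' : V → M)
    (hinv : ∀ x : V, level x ≤ max m (R.sup' hR fun ρ => mu met wf mr G hG x ρ))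
    (v p : V) (hadj : G.Adj p v)
    (hupd : level' v = met (level p) (wf s(v, p)))
    (hother : ∀ x : V, x ≠ v → level' x = level x) :
    ∀ x : V, level' x ≤ max m (R.sup' hR fun ρ => mu met wf mr G hG x ρ) := by
  intro x
  by_cases hx : x = v
  · subst hx
    rw [hupd]
    rcases le_max_iff.mp (hinv p) with hp | hp
    · -- level p ≤ m
      exact le_max_of_le_left (le_trans (met_le_self hbounded _ _) hp)
    · -- level p ≤ sup of mu's
      obtain ⟨ρ, hρR, hρ⟩ := Finset.exists_mem_eq_sup' hR (fun ρ => mu met wf mr G hG p ρ)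
      rw [hρ] at hp
      obtain ⟨P, _, hP⟩ := Finset.exists_mem_eq_sup'
        ((Finset.univ_nonempty_iff (α := G.Path ρ p)).mpr
          ((hG.preconnected ρ p).elim fun q => ⟨q.toPath⟩))
        (fun P : G.Path ρ p => walkMetric met wf mr P.val)
      have hmuP : mu met wf mr G hG p ρ = walkMetric met wf mr P.val := hP
      have key : met (mu met wf mr G hG p ρ) (wf s(x, p)) ≤ mu met wf mr G hG x ρ := by
        rw [hmuP, Sym2.eq_swap,
          ← walkMetric_concat (met := met) (wf := wf) mr P.val hadj]
        exact walkMetric_le_mu mr hG hbounded hmono _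
      refine le_max_of_le_right (le_trans ?_ (Finset.le_sup' _ hρR))
      exact le_trans (met_mono hmono _ hp) key
  · rw [hother x hx]; exact hinv x
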